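/- Let λ ∈ ℂ with Re(λ) > 2, φ(x) = e^{-|x|}, f ∈ L²(ℝ), and suppose v ∈ H¹_loc(ℝ∖{0}) ∩ L²(ℝ) with v(ξ) → 0 as ξ → ±∞ satisfies the resolvent equation (1-φ²)v' + φφ' v − λ v = f. Then (Re λ − 2) ‖v‖_{L²} ≤ ‖f‖_{L²}. -/

import Mathlib

/-!
Multiplying the equation by `v̄` and taking real parts shows that `G = (1 - φ²)|v|²` has derivative
`2 Re (f v̄) - 4 φφ' |v|² + 2 Re λ |v|²` away from `0`, an integrable function. `G` vanishes at
`±∞`, and so do its one-sided limits at the kink `0`: since `1 - φ² ≤ 2|x|`, a positive limit would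
force `|v|² ≳ 1/|x|` near `0`, which is not integrable. Hence `∫ G' = 0`, and `|φφ'| ≤ 1` together
with Cauchy–Schwarz gives `(Re λ - 2) ‖v‖² ≤ ‖f‖ ‖v‖`.
-/

open MeasureTheory Real Set Filter

noncomputable def phi (x : ℝ) : ℝ := Real.exp (-|x|)

/-- `φ'(x) = -sgn(x) e^{-|x|}` (a.e. derivative). -/
noncomputable def phi' (x : ℝ) : ℝ := -Real.sign x * Real.exp (-|x|)

open scoped Topology InnerProductSpace

@[fun_prop]
lemma measurable_real_sign : Measurable Real.sign :=
  Measurable.ite measurableSet_Iio measurable_const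
    (Measurable.ite measurableSet_Ioi measurable_const measurable_const)

lemma abs_real_sign_le_one (x : ℝ) : |Real.sign x| ≤ 1 := by
  rcases Real.sign_apply_eq x with h | h | h <;> simp [h]

lemma coe_signType_sign_eq_real_sign (x : ℝ) :
    ((SignType.sign x : SignType) : ℝ) = Real.sign x := by
  rcases lt_trichotomy x 0 with h | rfl | h
  · simp [h, Real.sign_of_neg]
  · simp [Real.sign_zero]
  · simp [h, Real.sign_of_pos]

lemma phi_nonneg (x : ℝ) : 0 ≤ phi x := (Real.exp_pos _).le

lemma phi_le_one (x : ℝ) : phi x ≤ 1 :=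
  Real.exp_le_one_iff.2 (neg_nonpos.2 (abs_nonneg x))

lemma phi_sq_le_one (x : ℝ) : phi x ^ 2 ≤ 1 := pow_le_one₀ (phi_nonneg x) (phi_le_one x)

lemma one_sub_phi_sq_le_two_mul_abs (x : ℝ) : 1 - phi x ^ 2 ≤ 2 * |x| := by
  have : phi x ^ 2 = Real.exp (-(2 * |x|)) := by rw [phi, ← Real.exp_nat_mul]; ring_nf
  linarith [Real.add_one_le_exp (-(2 * |x|))]

lemma abs_phi_mul_phi'_le_one (x : ℝ) : |phi x * phi' x| ≤ 1 := by
  rw [phi', ← phi, abs_mul, abs_mul, abs_neg, abs_of_nonneg (phi_nonneg x)]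
  exact mul_le_one₀ (phi_le_one x) (mul_nonneg (abs_nonneg _) (phi_nonneg x))
    (mul_le_one₀ (abs_real_sign_le_one x) (phi_nonneg x) (phi_le_one x))

lemma measurable_phi_mul_phi' : Measurable fun x => phi x * phi' x := by
  unfold phi phi'
  fun_prop

lemma hasDerivAt_one_sub_phi_sq {x : ℝ} (hx : x ≠ 0) :
    HasDerivAt (fun y => 1 - phi y ^ 2) (-2 * (phi x * phi' x)) x := by
  have hphi : HasDerivAt phi (phi' x) x := (hasDerivAt_abs hx).neg.exp.congr_deriv <| by
    simp only [phi', Pi.neg_apply, coe_signType_sign_eq_real_sign]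
    ring
  exact ((hphi.fun_pow 2).const_sub 1).congr_deriv (by ring)

section FTC

variable {E : Type*} [NormedAddCommGroup E] [NormedSpace ℝ E] [CompleteSpace E]
  {f f' : ℝ → E} {a : ℝ} {m : E}

theorem tendsto_nhdsGT_of_hasDerivAt_of_integrableOn_Ioi
    (hderiv : ∀ x ∈ Ioi a, HasDerivAt f (f' x) x) (f'int : IntegrableOn f' (Ioi a))
    (hf : Tendsto f atTop (𝓝 m)) :
    Tendsto f (𝓝[>] a) (𝓝 (m - ∫ x in Ioi a, f' x)) := by
  have hprim : Tendsto (fun t => ∫ x in Ioi t, f' x) (𝓝[>] a) (𝓝 (∫ x in Ioi a, f' x)) :=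
    f'int.continuousWithinAt_Ici_primitive_Ioi.tendsto.mono_left
      (nhdsWithin_mono _ Ioi_subset_Ici_self)
  refine (tendsto_const_nhds.sub hprim).congr' ?_
  filter_upwards [self_mem_nhdsWithin] with t (ht : a < t)
  rw [integral_Ioi_of_hasDerivAt_of_tendsto' (fun x hx => hderiv x (ht.trans_le hx))
    (f'int.mono_set (Ioi_subset_Ioi ht.le)) hf, sub_sub_cancel]

theorem tendsto_nhdsLT_of_hasDerivAt_of_integrableOn_Iio
    (hderiv : ∀ x ∈ Iio a, HasDerivAt f (f' x) x) (f'int : IntegrableOn f' (Iio a))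
    (hf : Tendsto f atBot (𝓝 m)) :
    Tendsto f (𝓝[<] a) (𝓝 (m + ∫ x in Iio a, f' x)) := by
  have hprim : Tendsto (fun t => ∫ x in Iio t, f' x) (𝓝[<] a) (𝓝 (∫ x in Iio a, f' x)) :=
    f'int.continuousWithinAt_Iic_primitive_Iio.tendsto.mono_left
      (nhdsWithin_mono _ Iio_subset_Iic_self)
  refine (tendsto_const_nhds.add hprim).congr' ?_
  filter_upwards [self_mem_nhdsWithin] with t (ht : t < a)
  rw [← integral_Iic_eq_integral_Iio, integral_Iic_of_hasDerivAt_of_tendsto'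
    (fun x hx => hderiv x ((mem_Iic.1 hx).trans_lt ht))
    ((f'int.mono_set (Iio_subset_Iio ht.le)).congr_set_ae Iio_ae_eq_Iic.symm) hf,
    add_sub_cancel]

end FTC

theorem nonpos_of_tendsto_nhdsGT_zero_of_le_mul {G E : ℝ → ℝ} {L : ℝ}
    (hlim : Tendsto G (𝓝[>] 0) (𝓝 L)) (hle : ∀ x, 0 < x → G x ≤ x * E x)
    (hE : IntegrableOn E (Ioi 0)) : L ≤ 0 := by
  by_contra! hL
  obtain ⟨δ, hδ, hG⟩ := mem_nhdsGT_iff_exists_Ioc_subset.1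
    (hlim.eventually (eventually_gt_nhds (half_lt_self hL)))
  have hinv : IntegrableOn (fun x : ℝ => x⁻¹) (Ioc 0 δ) := by
    refine ((hE.mono_set Ioc_subset_Ioi_self).const_mul (2 / L)).mono'
      measurable_inv.aestronglyMeasurable ?_
    refine (ae_restrict_iff' measurableSet_Ioc).2 (ae_of_all _ fun x hx => ?_)
    have hx0 : 0 < x := hx.1
    have h1 : L / 2 < x * E x := (hG hx).out.trans_le (hle x hx0)
    rw [norm_inv, Real.norm_of_nonneg hx0.le, inv_le_iff_one_le_mul₀' hx0]
    field_simp
    nlinarith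
  have := intervalIntegrable_inv_iff.1
    ((intervalIntegrable_iff_integrableOn_Ioc_of_le (mem_Ioi.1 hδ).le).2 hinv)
  exact (mem_Ioi.1 hδ).ne (by simpa using this)

theorem integral_eq_zero_of_hasDerivAt_of_le_abs_mul {G g E : ℝ → ℝ}
    (hderiv : ∀ x ≠ 0, HasDerivAt G (g x) x) (hg : Integrable g) (hE : Integrable E)
    (hG : ∀ x, 0 ≤ G x) (hGE : ∀ x, G x ≤ |x| * E x)
    (htop : Tendsto G atTop (𝓝 0)) (hbot : Tendsto G atBot (𝓝 0)) :
    ∫ x, g x = 0 := by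
  have hright := tendsto_nhdsGT_of_hasDerivAt_of_integrableOn_Ioi
    (fun x hx => hderiv x (ne_of_gt hx)) hg.integrableOn htop
  have hleft := tendsto_nhdsLT_of_hasDerivAt_of_integrableOn_Iio
    (fun x hx => hderiv x (ne_of_lt hx)) hg.integrableOn hbot
  have hright_le := nonpos_of_tendsto_nhdsGT_zero_of_le_mul hright
    (fun x hx => by simpa [abs_of_pos hx] using hGE x) hE.integrableOn
  have hleft_le := nonpos_of_tendsto_nhdsGT_zero_of_le_mul (E := fun x => E (-x))
    (hleft.comp (neg_zero (G := ℝ) ▸ tendsto_neg_nhdsGT_neg))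
    (fun x hx => by simpa [abs_of_pos hx] using hGE (-x)) hE.comp_neg.integrableOn
  have hright_ge := ge_of_tendsto hright (Eventually.of_forall hG)
  have hleft_ge := ge_of_tendsto hleft (Eventually.of_forall hG)
  rw [← intervalIntegral.integral_Iio_add_Ici hg.integrableOn hg.integrableOn,
    integral_Ici_eq_integral_Ioi]
  linarith

lemma hasDerivAt_mul_norm_sq_of_eq {a : ℝ → ℝ} {w : ℝ → ℂ} {a' b : ℝ} {dw h lam : ℂ} {x : ℝ}
    (ha : HasDerivAt a a' x) (hw : HasDerivAt w dw x)
    (heq : (a x : ℂ) * dw + (b : ℂ) * w x - lam * w x = h) :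
    HasDerivAt (fun y => a y * ‖w y‖ ^ 2)
      (a' * ‖w x‖ ^ 2 + 2 * (⟪w x, h⟫_ℝ - b * ‖w x‖ ^ 2 + lam.re * ‖w x‖ ^ 2)) x := by
  refine (ha.mul hw.norm_sq).congr_deriv ?_
  rw [← heq]
  simp only [Complex.inner, Complex.sq_norm, Complex.normSq_apply, Complex.mul_re, Complex.sub_re,
    Complex.add_re, Complex.mul_im, Complex.sub_im, Complex.add_im, Complex.ofReal_re,
    Complex.ofReal_im, Complex.conj_re, Complex.conj_im]
  ring

namespace MeasureTheory

variable {α E : Type*} [MeasurableSpace α] {μ : Measure α}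

lemma integral_norm_mul_norm_le_sqrt_mul_sqrt [NormedAddCommGroup E]
    {f g : α → E} (hf : MemLp f 2 μ) (hg : MemLp g 2 μ) :
    ∫ x, ‖f x‖ * ‖g x‖ ∂μ ≤ √(∫ x, ‖f x‖ ^ 2 ∂μ) * √(∫ x, ‖g x‖ ^ 2 ∂μ) := by
  have hholder := integral_mul_norm_le_Lp_mul_Lq (p := 2) (q := 2) Real.HolderConjugate.two_two
    (by simpa using hf) (by simpa using hg)
  simpa [Real.sqrt_eq_rpow] using hholder

variable [NormedAddCommGroup E] [InnerProductSpace ℝ E] {f g : α → E}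

lemma MemLp.integrable_real_inner (hf : MemLp f 2 μ) (hg : MemLp g 2 μ) :
    Integrable (fun x => ⟪f x, g x⟫_ℝ) μ :=
  (hf.norm.integrable_mul hg.norm).mono' (hf.1.inner hg.1)
    (ae_of_all _ fun x => norm_inner_le_norm (f x) (g x))

lemma abs_integral_real_inner_le_sqrt_mul_sqrt (hf : MemLp f 2 μ) (hg : MemLp g 2 μ) :
    |∫ x, ⟪f x, g x⟫_ℝ ∂μ| ≤ √(∫ x, ‖f x‖ ^ 2 ∂μ) * √(∫ x, ‖g x‖ ^ 2 ∂μ) :=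
  abs_integral_le_integral_abs.trans <| (integral_mono (hf.integrable_real_inner hg).abs
    (hf.norm.integrable_mul hg.norm) fun x => abs_real_inner_le_norm (f x) (g x)).trans
    (integral_norm_mul_norm_le_sqrt_mul_sqrt hf hg)

end MeasureTheory

lemma mul_sqrt_le_of_mul_le_sqrt_mul_sqrt {c s t : ℝ} (hs : 0 ≤ s) (h : c * s ≤ √t * √s) :
    c * √s ≤ √t := by
  rcases (Real.sqrt_nonneg s).eq_or_lt with hs0 | hs0
  · rw [← hs0, mul_zero]; exact Real.sqrt_nonneg t
  · have : c * √s * √s ≤ √t * √s := by rwa [mul_assoc, Real.mul_self_sqrt hs]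
    exact le_of_mul_le_mul_right this hs0

theorem re_sub_two_mul_integral_norm_sq_le (lam : ℂ) (f v dv : ℝ → ℂ)
    (hf : MemLp f 2 volume) (hv : MemLp v 2 volume)
    (hderiv : ∀ ξ : ℝ, ξ ≠ 0 → HasDerivAt v (dv ξ) ξ)
    (htop : Tendsto v atTop (𝓝 0)) (hbot : Tendsto v atBot (𝓝 0))
    (heq : ∀ ξ : ℝ, ξ ≠ 0 →
      ((1 - phi ξ ^ 2 : ℝ) : ℂ) * dv ξ + ((phi ξ * phi' ξ : ℝ) : ℂ) * v ξ - lam * v ξ = f ξ) :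
    (lam.re - 2) * ∫ x, ‖v x‖ ^ 2 ≤ -∫ x, ⟪v x, f x⟫_ℝ := by
  set E : ℝ → ℝ := fun x => ‖v x‖ ^ 2
  have hE : Integrable E := (memLp_two_iff_integrable_sq_norm hv.1).1 hv
  have hP : Integrable fun x => phi x * phi' x * E x :=
    hE.bdd_mul measurable_phi_mul_phi'.aestronglyMeasurable
      (ae_of_all _ fun x => abs_phi_mul_phi'_le_one x)
  have hI : Integrable fun x => ⟪v x, f x⟫_ℝ := hv.integrable_real_inner hf
  have hIP : Integrable fun x => 2 * ⟪v x, f x⟫_ℝ - 4 * (phi x * phi' x * E x) :=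
    (hI.const_mul 2).sub (hP.const_mul 4)
  have hG0 (x : ℝ) : 0 ≤ (1 - phi x ^ 2) * E x :=
    mul_nonneg (sub_nonneg.2 (phi_sq_le_one x)) (sq_nonneg _)
  have hGE (x : ℝ) : (1 - phi x ^ 2) * E x ≤ E x :=
    mul_le_of_le_one_left (sq_nonneg _) (by linarith [sq_nonneg (phi x)])
  have hzero := integral_eq_zero_of_hasDerivAt_of_le_abs_mul
    (G := fun x => (1 - phi x ^ 2) * E x)
    (g := fun x => 2 * ⟪v x, f x⟫_ℝ - 4 * (phi x * phi' x * E x) + 2 * lam.re * E x)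
    (fun x hx => (hasDerivAt_mul_norm_sq_of_eq (hasDerivAt_one_sub_phi_sq hx) (hderiv x hx)
      (heq x hx)).congr_deriv (by ring))
    (hIP.add (hE.const_mul _)) (hE.const_mul 2) hG0
    (fun x => by nlinarith [one_sub_phi_sq_le_two_mul_abs x, sq_nonneg (‖v x‖)])
    (squeeze_zero hG0 hGE (by simpa using htop.norm.pow 2))
    (squeeze_zero hG0 hGE (by simpa using hbot.norm.pow 2))
  have hPE : ∫ x, phi x * phi' x * E x ≤ ∫ x, E x :=
    integral_mono hP hE fun x => mul_le_of_le_one_left (sq_nonneg _)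
      ((le_abs_self _).trans (abs_phi_mul_phi'_le_one x))
  rw [integral_add hIP (hE.const_mul _), integral_sub (hI.const_mul 2) (hP.const_mul 4),
    integral_const_mul, integral_const_mul, integral_const_mul] at hzero
  linarith

theorem resolvent_bound_general
    (lam : ℂ) (f v dv : ℝ → ℂ)
    (hf : MeasureTheory.MemLp f 2 (volume : Measure ℝ))
    (hv : MeasureTheory.MemLp v 2 (volume : Measure ℝ))
    (hderiv : ∀ ξ : ℝ, ξ ≠ 0 → HasDerivAt v (dv ξ) ξ)
    (htop : Filter.Tendsto v Filter.atTop (nhds 0))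
    (hbot : Filter.Tendsto v Filter.atBot (nhds 0))
    (heq : ∀ ξ : ℝ, ξ ≠ 0 →
      ((1 - phi ξ ^ 2 : ℝ) : ℂ) * dv ξ + ((phi ξ * phi' ξ : ℝ) : ℂ) * v ξ - lam * v ξ = f ξ) :
    (lam.re - 2) * Real.sqrt (∫ x : ℝ, ‖v x‖ ^ 2) ≤ Real.sqrt (∫ x : ℝ, ‖f x‖ ^ 2) := by
  have henergy := re_sub_two_mul_integral_norm_sq_le lam f v dv hf hv hderiv htop hbot heq
  have hCS := abs_integral_real_inner_le_sqrt_mul_sqrt hv hf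
  refine mul_sqrt_le_of_mul_le_sqrt_mul_sqrt (integral_nonneg fun x => sq_nonneg _) ?_
  rw [mul_comm √(∫ x, ‖f x‖ ^ 2)]
  linarith [neg_abs_le (∫ x, ⟪v x, f x⟫_ℝ)]

/-- If `Re λ > 2` and `v` (differentiable off `0`, in `L²`, decaying at `±∞`) solves the
resolvent equation `(1-φ²)v' + φφ'v - λv = f` with `f ∈ L²`, then
`(Re λ - 2)‖v‖_{L²} ≤ ‖f‖_{L²}`. -/
theorem resolvent_bound
    (lam : ℂ) (hlam : 2 < lam.re) (f v dv : ℝ → ℂ)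
    (hf : MeasureTheory.MemLp f 2 (volume : Measure ℝ))
    (hv : MeasureTheory.MemLp v 2 (volume : Measure ℝ))
    (hderiv : ∀ ξ : ℝ, ξ ≠ 0 → HasDerivAt v (dv ξ) ξ)
    (htop : Filter.Tendsto v Filter.atTop (nhds 0))
    (hbot : Filter.Tendsto v Filter.atBot (nhds 0))
    (heq : ∀ ξ : ℝ, ξ ≠ 0 →
      ((1 - phi ξ ^ 2 : ℝ) : ℂ) * dv ξ + ((phi ξ * phi' ξ : ℝ) : ℂ) * v ξ - lam * v ξ = f ξ) :
    (lam.re - 2) * Real.sqrt (∫ x : ℝ, ‖v x‖ ^ 2) ≤ Real.sqrt (∫ x : ℝ, ‖f x‖ ^ 2) :=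
  resolvent_bound_general lam f v dv hf hv hderiv htop hbot heq
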